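/- arXiv:2504.04515 — 2 statements merged into one kernel-verified Lean document; each statement's English description precedes it below -/
import Mathlib

section
/- Let λ = (λ_1,…,λ_{n+1}) ∈ ℝ^{n+1} lie in the closed positive cone Γ̄_k^+ (i.e., σ_1(λ) ≥ 0, …, σ_k(λ) ≥ 0) for 1 ≤ k ≤ n. Then ((n+1−k)/(n+1))·σ_k(λ)·σ_1(λ) − (k+1)·σ_{k+1}(λ) ≥ 0. -/
open Finset

/-- The k-th elementary symmetric polynomial of `x ∈ ℝ^m`. -/
def esym {m : ℕ} (k : ℕ) (x : Fin m → ℝ) : ℝ :=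
  ∑ s ∈ Finset.univ.powersetCard k, ∏ i ∈ s, x i

/-!
With the means `E_j = σ_j / C(m, j)`, the claim reads `E_{k+1} ≤ E_1 E_k`. The polynomial
`∏ (X + λ_i) = ∑ C(m, j) E_j X^{m-j}` is real-rooted; differentiating drops the last mean and
reversing the coefficients reverses the sequence of means, and both preserve real-rootedness
(Rolle). Cutting down to a quadratic this way gives Newton's inequalities
`E_{j-1} E_{j+1} ≤ E_j²`, from which `E_{j+1} ≤ E_1 E_j` follows by induction on `j` as long as
`E_1, …, E_k > 0`. The closed cone is reached by shifting `λ` by `t > 0`, which makes all of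
`σ_1, …, σ_k` positive, and letting `t → 0`.
-/

open Polynomial

namespace Polynomial

theorem Splits.reverse {R : Type*} [DivisionSemiring R] {p : R[X]} (hp : p.Splits) :
    p.reverse.Splits := by
  induction hp using Submonoid.closure_induction with
  | mem f hf =>
    rcases hf with ⟨a, rfl⟩ | ⟨a, rfl⟩
    · rw [reverse_C]; exact Splits.C a
    · exact .of_natDegree_le_one ((reverse_natDegree_le _).trans (natDegree_X_add_C a).le)
  | one => rw [← C_1, reverse_C]; exact Splits.C 1
  | mul f g _ _ hf hg => rw [reverse_mul_of_domain]; exact hf.mul hg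

theorem Splits.derivative {p : ℝ[X]} (hp : p.Splits) : (Polynomial.derivative p).Splits := by
  rw [splits_iff_card_roots] at hp ⊢
  have := card_roots_le_derivative p
  have := card_roots' (Polynomial.derivative p)
  have := natDegree_derivative_le p
  omega

theorem discrim_nonneg_of_splits {a b c : ℝ} (ha : a ≠ 0)
    (h : (C a * X ^ 2 + C b * X + C c).Splits) : 0 ≤ discrim a b c := by
  obtain ⟨x, hx⟩ := h.exists_eval_eq_zero (by rw [degree_quadratic ha]; decide)
  rw [discrim_eq_sq_of_quadratic_eq_zero (by simpa [sq] using hx)]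
  positivity

end Polynomial

section BinomPoly

variable {R : Type*} [CommSemiring R]

noncomputable def binomPoly (m : ℕ) (e : ℕ → R) : R[X] :=
  ∑ j ∈ range (m + 1), C (m.choose j * e j) * X ^ (m - j)

theorem binomPoly_eq_sum_X_pow (m : ℕ) (e : ℕ → R) :
    binomPoly m e = ∑ i ∈ range (m + 1), C (m.choose i * e (m - i)) * X ^ i := by
  rw [binomPoly, ← sum_range_reflect]
  refine sum_congr rfl fun i hi => ?_
  have hi : i ≤ m := Nat.lt_succ_iff.mp (mem_range.mp hi)
  rw [add_tsub_cancel_right, Nat.choose_symm hi, Nat.sub_sub_self hi]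

theorem coeff_binomPoly (m : ℕ) (e : ℕ → R) (i : ℕ) :
    (binomPoly m e).coeff i = if i ≤ m then m.choose i * e (m - i) else 0 := by
  simp only [binomPoly_eq_sum_X_pow, finsetSum_coeff, coeff_C_mul_X_pow, sum_ite_eq,
    mem_range, Nat.lt_succ_iff]

theorem derivative_binomPoly_succ (m : ℕ) (e : ℕ → R) :
    derivative (binomPoly (m + 1) e) = C ((m : R) + 1) * binomPoly m e := by
  rw [binomPoly, sum_range_succ, binomPoly, mul_sum, derivative_add, derivative_sum,
    Nat.sub_self, pow_zero, mul_one, derivative_C, add_zero]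
  refine sum_congr rfl fun j hj => ?_
  have hj : j ≤ m := Nat.lt_succ_iff.mp (mem_range.mp hj)
  have hchoose : (m + 1).choose j * (m - j + 1) = (m + 1) * m.choose j := by
    rw [← Nat.sub_add_comm hj, ← Nat.choose_mul_succ_eq, mul_comm]
  rw [derivative_C_mul_X_pow, ← mul_assoc, ← C_mul, Nat.sub_add_comm hj, Nat.add_sub_cancel]
  congr 2
  rw [mul_right_comm, ← mul_assoc]
  exact_mod_cast congrArg (fun n : ℕ => (n : R) * e j) hchoose

theorem reverse_binomPoly {m : ℕ} {e : ℕ → R} (he : e 0 ≠ 0) :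
    (binomPoly m e).reverse = binomPoly m (fun j => e (m - j)) := by
  have hdeg : (binomPoly m e).natDegree = m :=
    natDegree_eq_of_le_of_coeff_ne_zero
      (natDegree_le_iff_coeff_eq_zero.mpr fun i hi => by simp [coeff_binomPoly, hi.not_ge])
      (by simpa [coeff_binomPoly] using he)
  ext i
  rw [coeff_reverse, hdeg, coeff_binomPoly, coeff_binomPoly]
  by_cases hi : i ≤ m
  · rw [revAt_le hi, if_pos (Nat.sub_le m i), if_pos hi, Nat.choose_symm hi, Nat.sub_sub_self hi]
  · rw [revAt_eq_self_of_lt (not_le.mp hi), if_neg hi, if_neg hi]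

theorem binomPoly_two (e : ℕ → R) :
    binomPoly 2 e = C (e 0) * X ^ 2 + C (2 * e 1) * X + C (e 2) := by
  simp [binomPoly, sum_range_succ, C_mul, C_ofNat]

end BinomPoly

theorem Polynomial.Splits.binomPoly_of_le {m n : ℕ} {e : ℕ → ℝ} (h : (binomPoly n e).Splits)
    (hmn : m ≤ n) : (binomPoly m e).Splits := by
  obtain ⟨r, rfl⟩ := exists_add_of_le hmn
  clear hmn
  induction r with
  | zero => exact h
  | succ r ih =>
    apply ih
    have := h.derivative.C_mul (((m + r : ℕ) : ℝ) + 1)⁻¹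
    rwa [← add_assoc, derivative_binomPoly_succ, ← mul_assoc, ← C_mul,
      inv_mul_cancel₀ (by positivity), C_1, one_mul] at this

theorem mul_le_sq_of_splits_binomPoly {m j : ℕ} {e : ℕ → ℝ} (he : e 0 ≠ 0)
    (h : (binomPoly m e).Splits) (hj : j + 2 ≤ m) : e j * e (j + 2) ≤ e (j + 1) ^ 2 := by
  have hrev : (binomPoly 2 fun i => e (j + 2 - i)).Splits := by
    have := (h.binomPoly_of_le hj).reverse
    rw [reverse_binomPoly he] at this
    exact this.binomPoly_of_le (by omega)
  rcases eq_or_ne (e (j + 2)) 0 with h0 | h0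
  · rw [h0, mul_zero]; positivity
  rw [binomPoly_two, Nat.sub_zero, show j + 2 - 1 = j + 1 by omega, Nat.add_sub_cancel] at hrev
  have := discrim_nonneg_of_splits h0 hrev
  rw [discrim] at this
  linarith

theorem esym_zero {m : ℕ} (x : Fin m → ℝ) : esym 0 x = 1 := by
  simp [esym]

noncomputable def esymMean {m : ℕ} (k : ℕ) (x : Fin m → ℝ) : ℝ :=
  esym k x / m.choose k

section Esym

variable {m : ℕ}

theorem esymMean_zero (x : Fin m → ℝ) : esymMean 0 x = 1 := by
  simp [esymMean, esym_zero]

theorem esymMean_pos {k : ℕ} {x : Fin m → ℝ} (hk : k ≤ m) (hx : 0 < esym k x) :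
    0 < esymMean k x :=
  div_pos hx (by exact_mod_cast Nat.choose_pos hk)

theorem prod_X_add_C_eq_sum_esym (x : Fin m → ℝ) :
    ∏ i, (X + C (x i)) = ∑ j ∈ range (m + 1), C (esym j x) * X ^ (m - j) := by
  have := Multiset.prod_X_add_C_eq_sum_esymm (univ.val.map x)
  simp only [Multiset.map_map, Multiset.card_map, card_val, card_univ, Fintype.card_fin,
    Finset.esymm_map_val] at this
  exact this

theorem coeff_prod_X_add_C (x : Fin m → ℝ) {j : ℕ} (hj : j ≤ m) :
    (∏ i, (X + C (x i))).coeff (m - j) = esym j x := by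
  rw [Finset.prod_X_add_C_coeff _ _ (by simp), card_univ, Fintype.card_fin, Nat.sub_sub_self hj]
  rfl

theorem prod_X_add_C_eq_binomPoly (x : Fin m → ℝ) :
    ∏ i, (X + C (x i)) = binomPoly m fun k => esymMean k x := by
  rw [prod_X_add_C_eq_sum_esym, binomPoly]
  refine sum_congr rfl fun j hj => ?_
  have hj : j ≤ m := Nat.lt_succ_iff.mp (mem_range.mp hj)
  rw [esymMean, mul_div_cancel₀ _ (by exact_mod_cast (Nat.choose_pos hj).ne')]

theorem esymMean_mul_le_sq {j : ℕ} (x : Fin m → ℝ) (hj : j + 2 ≤ m) :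
    esymMean j x * esymMean (j + 2) x ≤ esymMean (j + 1) x ^ 2 :=
  mul_le_sq_of_splits_binomPoly (by simp [esymMean_zero])
    (prod_X_add_C_eq_binomPoly x ▸ Splits.prod fun i _ => Splits.X_add_C _) hj

theorem esymMean_succ_le_of_pos {k : ℕ} {x : Fin m → ℝ} (hkm : k < m)
    (hx : ∀ j ≤ k, 0 < esym j x) : esymMean (k + 1) x ≤ esymMean 1 x * esymMean k x := by
  induction k with
  | zero => simp [esymMean_zero]
  | succ k ih =>
    have hk := ih (by omega) fun j hj => hx j (by omega)
    have hpos : ∀ j ≤ k + 1, 0 < esymMean j x := fun j hj => esymMean_pos (by omega) (hx j hj)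
    refine le_of_mul_le_mul_left ?_ (hpos k (by omega))
    calc esymMean k x * esymMean (k + 2) x
        ≤ esymMean (k + 1) x * esymMean (k + 1) x := by
          rw [← sq]; exact esymMean_mul_le_sq x (by omega)
      _ ≤ esymMean (k + 1) x * (esymMean 1 x * esymMean k x) :=
          mul_le_mul_of_nonneg_left hk (hpos (k + 1) le_rfl).le
      _ = esymMean k x * (esymMean 1 x * esymMean (k + 1) x) := by ring

theorem esym_add_const (x : Fin m → ℝ) (t : ℝ) {j : ℕ} (hj : j ≤ m) :
    esym j (fun i => x i + t) =
      ∑ i ∈ range (m + 1), esym i x * (t ^ (m - i - (m - j)) * (m - i).choose (m - j)) := by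
  have hcomp : ∏ i, (X + C (x i + t)) = (∏ i, (X + C (x i))).comp (X + C t) := by
    rw [Polynomial.prod_comp]
    refine prod_congr rfl fun i _ => ?_
    simp only [add_comp, X_comp, C_comp, C_add]
    ring
  rw [← coeff_prod_X_add_C _ hj, hcomp, prod_X_add_C_eq_sum_esym]
  simp only [Polynomial.sum_comp, mul_comp, C_comp, X_pow_comp, finsetSum_coeff, coeff_C_mul,
    coeff_X_add_C_pow]

theorem esym_add_const_pos {x : Fin m → ℝ} {t : ℝ} {j : ℕ} (hx : ∀ i ≤ j, 0 ≤ esym i x)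
    (ht : 0 < t) (hj : j ≤ m) : 0 < esym j (fun i => x i + t) := by
  rw [esym_add_const x t hj]
  refine sum_pos' (fun i hi => ?_) ⟨0, by simp, ?_⟩
  · by_cases hij : i ≤ j
    · have := hx i hij
      positivity
    · rw [Nat.choose_eq_zero_of_lt (by simp at hi; omega)]
      simp
  · rw [esym_zero]
    have := Nat.choose_pos (Nat.sub_le m j)
    positivity

theorem esymMean_succ_le {k : ℕ} {x : Fin m → ℝ} (hkm : k < m) (hx : ∀ j ≤ k, 0 ≤ esym j x) :
    esymMean (k + 1) x ≤ esymMean 1 x * esymMean k x := by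
  set f : ℝ → ℝ := fun t =>
    esymMean 1 (fun i => x i + t) * esymMean k (fun i => x i + t) -
      esymMean (k + 1) (fun i => x i + t)
  have hf : Continuous f := by simp only [f, esymMean, esym]; fun_prop
  have hpos : Set.Ioi 0 ⊆ {t | 0 ≤ f t} := fun t ht =>
    sub_nonneg.2 <| esymMean_succ_le_of_pos hkm fun j hj =>
      esym_add_const_pos (fun i hi => hx i (hi.trans hj)) ht (by omega)
  have : Set.Ici 0 ⊆ {t | 0 ≤ f t} := by
    rw [← closure_Ioi]; exact (isClosed_le continuous_const hf).closure_subset_iff.2 hpos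
  simpa [f] using this Set.self_mem_Ici

theorem mul_esym_succ_le_of_esymMean_le {k : ℕ} {x : Fin m → ℝ} (hkm : k < m)
    (h : esymMean (k + 1) x ≤ esymMean 1 x * esymMean k x) :
    ((k : ℝ) + 1) * esym (k + 1) x ≤ ((m : ℝ) - k) / m * esym k x * esym 1 x := by
  have hc := congrArg (Nat.cast : ℕ → ℝ) (Nat.choose_succ_right_eq m k)
  push_cast [Nat.cast_sub hkm.le] at hc
  have hck : (0 : ℝ) < m.choose k := by exact_mod_cast Nat.choose_pos hkm.le
  have hmk : (0 : ℝ) ≤ m - k := by rw [sub_nonneg]; exact_mod_cast hkm.le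
  have hck1 : (0 : ℝ) < m.choose (k + 1) := by exact_mod_cast Nat.choose_pos hkm
  have hm : (0 : ℝ) < m := by exact_mod_cast (Nat.zero_le k).trans_lt hkm
  simp only [esymMean, Nat.choose_one_right] at h
  calc ((k : ℝ) + 1) * esym (k + 1) x
      = m.choose k * (m - k) * (esym (k + 1) x / m.choose (k + 1)) := by
        rw [← hc]; field_simp
    _ ≤ m.choose k * (m - k) * (esym 1 x / m * (esym k x / m.choose k)) := by gcongr
    _ = ((m : ℝ) - k) / m * esym k x * esym 1 x := by field_simp

end Esym

theorem newton_ineq_closed_cone_general (n k : ℕ) (hkn : k ≤ n)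
    (lam : Fin (n+1) → ℝ)
    (hcone : ∀ j, 1 ≤ j → j ≤ k → 0 ≤ esym j lam) :
    0 ≤ (((n : ℝ) + 1 - k) / ((n : ℝ) + 1)) * esym k lam * esym 1 lam
        - ((k : ℝ) + 1) * esym (k+1) lam := by
  have hx : ∀ j ≤ k, 0 ≤ esym j lam := fun j hj => by
    rcases Nat.eq_zero_or_pos j with rfl | hj0
    · rw [esym_zero]; exact zero_le_one
    · exact hcone j hj0 hj
  have := mul_esym_succ_le_of_esymMean_le (by omega) (esymMean_succ_le (by omega) hx)
  push_cast at this
  linarith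

/-- For λ in the closed cone Γ̄_k^+,
((n+1−k)/(n+1))·σ_k(λ)·σ_1(λ) − (k+1)·σ_{k+1}(λ) ≥ 0. -/
theorem newton_ineq_closed_cone (n k : ℕ) (hk : 1 ≤ k) (hkn : k ≤ n)
    (lam : Fin (n+1) → ℝ)
    (hcone : ∀ j, 1 ≤ j → j ≤ k → 0 ≤ esym j lam) :
    0 ≤ (((n : ℝ) + 1 - k) / ((n : ℝ) + 1)) * esym k lam * esym 1 lam
        - ((k : ℝ) + 1) * esym (k+1) lam :=
  newton_ineq_closed_cone_general n k hkn lam hcone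
end

section
/- Let a > 0 > c and |y| > 1 with φ(x) = a|x−y|² + c positive on the closed unit ball, and let φ_y(z) = y + (|y|²−1)(z−y)/|z−y|². Then the pullback under φ_y of the metric (a|x−y|²+c)^{−2}|dx|² equals (a'|z−y|² + c')^{−2}|dz|², where a' = c/(|y|²−1) < 0 and c' = a(|y|²−1) > 0; moreover a'c' = ac and a'(|y|²−1) + c' = a(|y|²−1) + c. -/
/-! Inversion in the sphere about `y` orthogonal to the unit sphere sends a point at distance `t`
from `y` to one at distance `(‖y‖² - 1) / t`. Hence `a‖φ z - y‖² + c = a s² / t² + c`, with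
`s = ‖y‖² - 1` and `t = ‖z - y‖`, which factors as the conformal factor `s / t²` times
`(c / s) t² + a s`: the inversion exchanges the roles of `a` and `c`, rescaled by `s`. -/

theorem norm_div_norm_sq_smul_sq {E : Type*} [NormedAddCommGroup E] [NormedSpace ℝ E]
    (r : ℝ) (v : E) : ‖(r / ‖v‖ ^ 2) • v‖ ^ 2 = r ^ 2 / ‖v‖ ^ 2 := by
  rw [norm_smul, mul_pow, Real.norm_eq_abs, sq_abs]
  rcases eq_or_ne ‖v‖ 0 with hv | hv
  · simp [hv]
  · field_simp

theorem pullback_metric_inversion_general (n : ℕ) (a c : ℝ) (ha : 0 < a) (hc : c < 0)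
    (y : EuclideanSpace ℝ (Fin (n+1))) (hy : 1 < ‖y‖) :
    let φ : EuclideanSpace ℝ (Fin (n+1)) → EuclideanSpace ℝ (Fin (n+1)) :=
      fun z => y + ((‖y‖ ^ 2 - 1) / ‖z - y‖ ^ 2) • (z - y)
    let a' : ℝ := c / (‖y‖ ^ 2 - 1)
    let c' : ℝ := a * (‖y‖ ^ 2 - 1)
    a' < 0 ∧ 0 < c' ∧ a' * c' = a * c ∧
    a' * (‖y‖ ^ 2 - 1) + c' = a * (‖y‖ ^ 2 - 1) + c ∧
    (∀ z : EuclideanSpace ℝ (Fin (n+1)), z ≠ y →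
      a * ‖φ z - y‖ ^ 2 + c
        = ((‖y‖ ^ 2 - 1) / ‖z - y‖ ^ 2) * (a' * ‖z - y‖ ^ 2 + c')) := by
  intro φ a' c'
  have hs : 0 < ‖y‖ ^ 2 - 1 := by nlinarith [norm_nonneg y]
  refine ⟨div_neg_of_neg_of_pos hc hs, mul_pos ha hs, ?_, ?_, fun z hz => ?_⟩
  · simp only [a', c']
    field_simp
  · simp only [a', c']
    field_simp
    ring
  · have ht : ‖z - y‖ ≠ 0 := norm_ne_zero_iff.mpr (sub_ne_zero.mpr hz)
    have hdist : ‖φ z - y‖ ^ 2 = (‖y‖ ^ 2 - 1) ^ 2 / ‖z - y‖ ^ 2 := by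
      simp only [φ, add_sub_cancel_left, norm_div_norm_sq_smul_sq]
    rw [hdist]
    simp only [a', c']
    field_simp
    ring

/-- Pullback of the metric (a|x−y|²+c)^{−2}|dx|² under the inversion φ_y is
(a'|z−y|²+c')^{−2}|dz|² with a' = c/(|y|²−1), c' = a(|y|²−1); moreover
a'c' = ac and a'(|y|²−1)+c' = a(|y|²−1)+c. The pullback identity is expressed
via the conformal factor μ(z) = (|y|²−1)/|z−y|²:
u(φ_y z) = μ(z)·(a'|z−y|²+c'). -/
theorem pullback_metric_inversion (n : ℕ) (a c : ℝ) (ha : 0 < a) (hc : c < 0)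
    (y : EuclideanSpace ℝ (Fin (n+1))) (hy : 1 < ‖y‖)
    (hpos : ∀ x : EuclideanSpace ℝ (Fin (n+1)), ‖x‖ ≤ 1 → 0 < a * ‖x - y‖ ^ 2 + c) :
    let φ : EuclideanSpace ℝ (Fin (n+1)) → EuclideanSpace ℝ (Fin (n+1)) :=
      fun z => y + ((‖y‖ ^ 2 - 1) / ‖z - y‖ ^ 2) • (z - y)
    let a' : ℝ := c / (‖y‖ ^ 2 - 1)
    let c' : ℝ := a * (‖y‖ ^ 2 - 1)
    a' < 0 ∧ 0 < c' ∧ a' * c' = a * c ∧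
    a' * (‖y‖ ^ 2 - 1) + c' = a * (‖y‖ ^ 2 - 1) + c ∧
    (∀ z : EuclideanSpace ℝ (Fin (n+1)), z ≠ y →
      a * ‖φ z - y‖ ^ 2 + c
        = ((‖y‖ ^ 2 - 1) / ‖z - y‖ ^ 2) * (a' * ‖z - y‖ ^ 2 + c')) :=
  pullback_metric_inversion_general n a c ha hc y hy
end
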